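/- arXiv:2507.11484 — 8 statements merged into one kernel-verified Lean document; each statement's English description precedes it below -/
import Mathlib

section
/- Let S be a type, β a linear order, and f : Finset S → β be monotone and local. Let B ⊆ Q be finite subsets of S. If no element of Q is a violator of B (i.e., f(B ∪ {q}) ≤ f(B) for every q ∈ Q), then f(B) = f(Q). -/
/-- **Correctness of the LP-type algorithm at termination.**
If `f : Finset S → β` is monotone and local, `B ⊆ Q`, and no element of `Q`
is a violator of `B` (i.e. `f (insert q B) ≤ f B` for all `q ∈ Q`),
then `f B = f Q`. -/
theorem stmt_0 {S : Type*} [DecidableEq S] {β : Type*} [LinearOrder β]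
    (f : Finset S → β)
    (hmono : ∀ A B : Finset S, A ⊆ B → f A ≤ f B)
    (hlocal : ∀ A B : Finset S, A ⊆ B → f A = f B →
      ∀ x : S, f B < f (insert x B) → f A < f (insert x A))
    (B Q : Finset S) (hBQ : B ⊆ Q)
    (hnoviol : ∀ q ∈ Q, f (insert q B) ≤ f B) :
    f B = f Q := by
  have key : ∀ D : Finset S, D ⊆ Q → f B = f (B ∪ D) := by
    intro D
    induction D using Finset.induction_on with
    | empty => simp
    | @insert x D' hx ih =>
      intro hsub
      have hD' : D' ⊆ Q := (Finset.subset_insert x D').trans hsub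
      have hxQ : x ∈ Q := hsub (Finset.mem_insert_self x D')
      have hBD : f B = f (B ∪ D') := ih hD'
      rw [Finset.union_insert]
      by_contra hne
      have hle : f (B ∪ D') ≤ f (insert x (B ∪ D')) :=
        hmono _ _ (Finset.subset_insert _ _)
      have hlt : f (B ∪ D') < f (insert x (B ∪ D')) := by
        rcases lt_or_eq_of_le hle with h | h
        · exact h
        · exact absurd (hBD.trans h) hne
      have := hlocal B (B ∪ D') Finset.subset_union_left hBD x hlt
      exact absurd (hnoviol x hxQ) (not_le.mpr this)
  have := key Q le_rfl
  rwa [Finset.union_eq_right.mpr hBQ] at this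
end

section
/- Let S be a type, β a linear order, and f : Finset S → β be monotone and local. Let Q be a finite subset of S, let B* ⊆ Q satisfy f(B*) = f(Q) (B* is a basis of Q), and let B ⊆ Q. If some q ∈ Q is a violator of B (f(B ∪ {q}) > f(B)), then some element e ∈ B* is a violator of B (f(B ∪ {e}) > f(B)). -/
/-- **Every basis meets a nonempty violator set.**
If `f : Finset S → β` is monotone and local, `B* ⊆ Q` is a basis of `Q`
(`f B* = f Q`), `B ⊆ Q`, and some `q ∈ Q` is a violator of `B`, then some
element of `B*` is a violator of `B`. -/
theorem stmt_1 {S : Type*} [DecidableEq S] {β : Type*} [LinearOrder β]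
    (f : Finset S → β)
    (hmono : ∀ A B : Finset S, A ⊆ B → f A ≤ f B)
    (hlocal : ∀ A B : Finset S, A ⊆ B → f A = f B →
      ∀ x : S, f B < f (insert x B) → f A < f (insert x A))
    (Q Bstar B : Finset S) (hBstarQ : Bstar ⊆ Q) (hbasis : f Bstar = f Q)
    (hBQ : B ⊆ Q)
    (hviol : ∃ q ∈ Q, f B < f (insert q B)) :
    ∃ e ∈ Bstar, f B < f (insert e B) := by
  by_contra h
  push_neg at h
  -- every element of Bstar satisfies f (insert e B) = f B
  have heq : ∀ e ∈ Bstar, f (insert e B) = f B := fun e he =>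
    le_antisymm (h e he) (hmono _ _ (Finset.subset_insert _ _))
  -- claim: f (B ∪ C) = f B for all C ⊆ Bstar
  have key : ∀ C : Finset S, C ⊆ Bstar → f (B ∪ C) = f B := by
    intro C
    induction C using Finset.induction_on with
    | empty => intro _; rw [Finset.union_empty]
    | @insert a C' _ ih =>
      intro hsub
      have hC' : C' ⊆ Bstar := (Finset.subset_insert a C').trans hsub
      have ha : a ∈ Bstar := hsub (Finset.mem_insert_self a C')
      have hBC : f (B ∪ C') = f B := ih hC'
      have h1 : ¬ f (B ∪ C') < f (insert a (B ∪ C')) := by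
        intro hlt
        have := hlocal B (B ∪ C') Finset.subset_union_left hBC.symm a hlt
        exact absurd (heq a ha) (ne_of_gt this)
      have h2 : f (insert a (B ∪ C')) = f (B ∪ C') :=
        le_antisymm (not_lt.mp h1) (hmono _ _ (Finset.subset_insert _ _))
      rw [Finset.union_insert, h2, hBC]
  have hall : f (B ∪ Bstar) = f B := key Bstar (subset_refl _)
  obtain ⟨q, hqQ, hq⟩ := hviol
  have h3 : f (insert q B) ≤ f Q := hmono _ _ (Finset.insert_subset hqQ hBQ)
  have h4 : f Q ≤ f (B ∪ Bstar) := hbasis ▸ hmono _ _ Finset.subset_union_right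
  exact absurd (hall ▸ (h3.trans h4)) (not_le.mpr hq)
end

section
/- Let ε > 0, let c ∈ ℝ^d and r ≥ 0 with ‖c‖ ≤ r (the closed ball B(c, r) contains the origin), let q ∈ ℝ^d with ‖c − q‖ ≤ r, and let p ∈ ℝ^d satisfy ‖p − q‖ ≤ 2ε‖p‖ and ‖p‖ ≤ ‖q‖. Then ‖c − p‖ ≤ (1 + 4ε) r. Consequently, if (c, r) is a ball enclosing the snapped point set Q together with the net center (taken as the origin), then the inflated ball (c, (1+4ε)r) encloses every original point p ∈ P. -/
/-- **Unsnapping: the inflated ball encloses the original points.**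
If the ball `(c, r)` contains the origin (`‖c‖ ≤ r`) and contains the snapped
point `q` (`‖c − q‖ ≤ r`), and the original point `p` satisfies
`‖p − q‖ ≤ 2ε‖p‖` and `‖p‖ ≤ ‖q‖`, then `‖c − p‖ ≤ (1 + 4ε) r`. -/
theorem stmt_8 {d : ℕ} (ε : ℝ) (hε : 0 < ε)
    (c : EuclideanSpace ℝ (Fin d)) (r : ℝ) (hr : 0 ≤ r) (hcr : ‖c‖ ≤ r)
    (q p : EuclideanSpace ℝ (Fin d)) (hq : ‖c - q‖ ≤ r)
    (hpq : ‖p - q‖ ≤ 2 * ε * ‖p‖) (hpnorm : ‖p‖ ≤ ‖q‖) :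
    ‖c - p‖ ≤ (1 + 4 * ε) * r := by
  have h1 : ‖c - p‖ ≤ ‖c - q‖ + ‖q - p‖ := norm_sub_le_norm_sub_add_norm_sub c q p
  have h2 : ‖q - p‖ = ‖p - q‖ := norm_sub_rev q p
  have h3 : ‖q‖ ≤ ‖c - q‖ + ‖c‖ := by
    have := norm_sub_le (c - q) c
    simpa using this
  nlinarith [norm_nonneg p]
end

section
/- Let ε > 0, let c* ∈ ℝ^d and r* ≥ 0 with ‖c*‖ ≤ r* (the closed ball B(c*, r*) contains the origin), let p ∈ ℝ^d with ‖c* − p‖ ≤ r*, and let q ∈ ℝ^d satisfy ‖p − q‖ ≤ 2ε‖p‖. Then ‖c* − q‖ ≤ (1 + 4ε) r*. Consequently, if (c*, r*) is the minimum enclosing ball of the original point set P (which contains the net center, taken as the origin), then the ball (c*, (1+4ε)r*) encloses every snapped point q ∈ Q; hence the radius r of the minimum enclosing ball of Q satisfies r ≤ (1 + 4ε) r*. -/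
/-- **Snapping does not increase the MEB by much.**
If the ball `(c*, r*)` contains the origin (`‖c*‖ ≤ r*`) and the original
point `p` (`‖c* − p‖ ≤ r*`), and the snapped point `q` satisfies
`‖p − q‖ ≤ 2ε‖p‖`, then `‖c* − q‖ ≤ (1 + 4ε) r*`; hence the MEB of the
snapped points has radius at most `(1 + 4ε)` times that of the originals. -/
theorem stmt_9 {d : ℕ} (ε : ℝ) (hε : 0 < ε)
    (cstar : EuclideanSpace ℝ (Fin d)) (rstar : ℝ) (hr : 0 ≤ rstar)
    (hcr : ‖cstar‖ ≤ rstar)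
    (p q : EuclideanSpace ℝ (Fin d)) (hp : ‖cstar - p‖ ≤ rstar)
    (hpq : ‖p - q‖ ≤ 2 * ε * ‖p‖) :
    ‖cstar - q‖ ≤ (1 + 4 * ε) * rstar := by
  have h1 : ‖cstar - q‖ ≤ ‖cstar - p‖ + ‖p - q‖ := norm_sub_le_norm_sub_add_norm_sub _ _ _
  have h2 : ‖p‖ - ‖cstar‖ ≤ ‖p - cstar‖ := norm_sub_norm_le p cstar
  
  rw [norm_sub_rev] at h2
  nlinarith
end

section
/- Let γ > 0 and 0 < ε < 1/2. Let (x_1, y_1), ..., (x_n, y_n) be labeled points in ℝ^d × {−1, +1}, and let z_i = x_i + e_i with ‖e_i‖ ≤ εγ/2 for each i. Suppose u ∈ ℝ^d and b ∈ ℝ satisfy ‖u‖ ≤ 4/γ and y_i(⟨u, z_i⟩ − b) ≥ 1 for all i. Then y_i(⟨u, x_i⟩ − b) ≥ 1 − 2ε for all i; equivalently, the scaled hyperplane (u/(1−2ε), b/(1−2ε)) separates all original labeled points: y_i(⟨u/(1−2ε), x_i⟩ − b/(1−2ε)) ≥ 1 for all i. -/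
open scoped RealInnerProductSpace

/-- **A scaling of the optimal hyperplane for the snapped points separates
the original points.**
If `z i = x i + e i` with `‖e i‖ ≤ εγ/2`, `‖u‖ ≤ 4/γ`, and
`y i (⟨u, z i⟩ − b) ≥ 1` for all `i`, then `y i (⟨u, x i⟩ − b) ≥ 1 − 2ε`
for all `i`; equivalently `(u/(1−2ε), b/(1−2ε))` separates the originals. -/
theorem stmt_10 {d n : ℕ} (γ ε : ℝ) (hγ : 0 < γ) (hε0 : 0 < ε) (hε : ε < 1 / 2)
    (x z e : Fin n → EuclideanSpace ℝ (Fin d)) (y : Fin n → ℝ)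
    (hy : ∀ i, y i = 1 ∨ y i = -1)
    (hz : ∀ i, z i = x i + e i) (he : ∀ i, ‖e i‖ ≤ ε * γ / 2)
    (u : EuclideanSpace ℝ (Fin d)) (b : ℝ) (hu : ‖u‖ ≤ 4 / γ)
    (hsep : ∀ i, 1 ≤ y i * (⟪u, z i⟫ - b)) :
    (∀ i, 1 - 2 * ε ≤ y i * (⟪u, x i⟫ - b)) ∧
      (∀ i, 1 ≤ y i * (⟪(1 - 2 * ε)⁻¹ • u, x i⟫ - b / (1 - 2 * ε))) := by
  have key : ∀ i, 1 - 2 * ε ≤ y i * (⟪u, x i⟫ - b) := by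
    intro i
    have hinner : ⟪u, z i⟫ = ⟪u, x i⟫ + ⟪u, e i⟫ := by
      rw [hz i, inner_add_right]
    have habs : |⟪u, e i⟫| ≤ 2 * ε := by
      calc |⟪u, e i⟫| ≤ ‖u‖ * ‖e i‖ := abs_real_inner_le_norm _ _
        _ ≤ (4 / γ) * (ε * γ / 2) := by
            apply mul_le_mul hu (he i) (norm_nonneg _)
            positivity
        _ = 2 * ε := by field_simp; ring
    have hyabs : |y i| = 1 := by rcases hy i with h | h <;> simp [h]
    have h1 := hsep i
    rw [hinner] at h1
    have : |y i * ⟪u, e i⟫| ≤ 2 * ε := by rw [abs_mul, hyabs, one_mul]; exact habs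
    have h2 : y i * ⟪u, e i⟫ ≤ 2 * ε := le_trans (le_abs_self _) this
    nlinarith [h1, h2]
  refine ⟨key, fun i => ?_⟩
  have hpos : 0 < 1 - 2 * ε := by linarith
  rw [inner_smul_left, RCLike.conj_to_real]
  rw [show y i * ((1 - 2 * ε)⁻¹ * ⟪u, x i⟫ - b / (1 - 2 * ε))
      = (y i * (⟪u, x i⟫ - b)) / (1 - 2 * ε) by field_simp]
  rw [le_div_iff₀ hpos, one_mul]
  exact key i
end

section
/- Let γ > 0 and 0 < ε < 1/2. Let (x_1, y_1), ..., (x_n, y_n) be labeled points in ℝ^d × {−1, +1}, and let z_i = x_i + e_i with ‖e_i‖ ≤ εγ/2 for each i. Suppose u* ∈ ℝ^d and b* ∈ ℝ satisfy ‖u*‖ ≤ 4/γ and y_i(⟨u*, x_i⟩ − b*) ≥ 1 for all i. Then y_i(⟨u*/(1−2ε), z_i⟩ − b*/(1−2ε)) ≥ 1 for all i. Consequently, if u ∈ ℝ^d has minimal norm among all vectors admitting some bias b with y_i(⟨u, z_i⟩ − b) ≥ 1 for all i, then ‖u‖² ≤ ‖u*‖²/(1−2ε)². -/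
open scoped RealInnerProductSpace

/-- **The snapped SVM objective is at most `(1+O(ε))` times the original.**
If `z i = x i + e i` with `‖e i‖ ≤ εγ/2`, `‖u*‖ ≤ 4/γ`, and
`y i (⟨u*, x i⟩ − b*) ≥ 1` for all `i`, then the scaled hyperplane
`(u*/(1−2ε), b*/(1−2ε))` separates all snapped points; consequently any
minimal-norm separator `u` of the snapped points satisfies
`‖u‖² ≤ ‖u*‖²/(1−2ε)²`. -/
theorem stmt_11 {d n : ℕ} (γ ε : ℝ) (hγ : 0 < γ) (hε0 : 0 < ε) (hε : ε < 1 / 2)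
    (x z e : Fin n → EuclideanSpace ℝ (Fin d)) (y : Fin n → ℝ)
    (hy : ∀ i, y i = 1 ∨ y i = -1)
    (hz : ∀ i, z i = x i + e i) (he : ∀ i, ‖e i‖ ≤ ε * γ / 2)
    (ustar : EuclideanSpace ℝ (Fin d)) (bstar : ℝ) (hustar : ‖ustar‖ ≤ 4 / γ)
    (hsep : ∀ i, 1 ≤ y i * (⟪ustar, x i⟫ - bstar)) :
    (∀ i, 1 ≤ y i * (⟪(1 - 2 * ε)⁻¹ • ustar, z i⟫ - bstar / (1 - 2 * ε))) ∧
      ∀ u : EuclideanSpace ℝ (Fin d),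
        (∃ b : ℝ, ∀ i, 1 ≤ y i * (⟪u, z i⟫ - b)) →
        (∀ u' : EuclideanSpace ℝ (Fin d),
          (∃ b' : ℝ, ∀ i, 1 ≤ y i * (⟪u', z i⟫ - b')) → ‖u‖ ≤ ‖u'‖) →
        ‖u‖ ^ 2 ≤ ‖ustar‖ ^ 2 / (1 - 2 * ε) ^ 2 := by
  have h2ε : 0 < 1 - 2 * ε := by linarith
  have key : ∀ i, 1 ≤ y i * (⟪(1 - 2 * ε)⁻¹ • ustar, z i⟫ - bstar / (1 - 2 * ε)) := by
    intro i
    have hinner : |⟪ustar, e i⟫| ≤ 2 * ε := by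
      calc |⟪ustar, e i⟫| ≤ ‖ustar‖ * ‖e i‖ := abs_real_inner_le_norm _ _
        _ ≤ (4 / γ) * (ε * γ / 2) := by
            apply mul_le_mul hustar (he i) (norm_nonneg _)
            positivity
        _ = 2 * ε := by field_simp; ring
    have hye : |y i * ⟪ustar, e i⟫| ≤ 2 * ε := by
      rcases hy i with h | h <;> rw [h] <;> simpa using hinner
    have h1 : 1 - 2 * ε ≤ y i * (⟪ustar, z i⟫ - bstar) := by
      have : y i * (⟪ustar, z i⟫ - bstar)
          = y i * (⟪ustar, x i⟫ - bstar) + y i * ⟪ustar, e i⟫ := by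
        rw [hz i, inner_add_right]; ring
      rw [this]
      have := abs_le.mp hye
      linarith [hsep i, this.1]
    have : ⟪(1 - 2 * ε)⁻¹ • ustar, z i⟫ - bstar / (1 - 2 * ε)
        = (1 - 2 * ε)⁻¹ * (⟪ustar, z i⟫ - bstar) := by
      rw [real_inner_smul_left]; field_simp
    rw [this]
    rw [← sub_nonneg] at h1 ⊢
    have : y i * ((1 - 2 * ε)⁻¹ * (⟪ustar, z i⟫ - bstar)) - 1
        = (1 - 2 * ε)⁻¹ * (y i * (⟪ustar, z i⟫ - bstar) - (1 - 2 * ε)) := by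
      field_simp
    rw [this]
    positivity
  refine ⟨key, fun u _ hmin => ?_⟩
  have hle : ‖u‖ ≤ ‖(1 - 2 * ε)⁻¹ • ustar‖ :=
    hmin _ ⟨bstar / (1 - 2 * ε), key⟩
  have hnorm : ‖(1 - 2 * ε)⁻¹ • ustar‖ = (1 - 2 * ε)⁻¹ * ‖ustar‖ := by
    rw [norm_smul, Real.norm_eq_abs, abs_of_pos (by positivity)]
  have h2 : ‖u‖ ^ 2 ≤ ((1 - 2 * ε)⁻¹ * ‖ustar‖) ^ 2 := by
    apply pow_le_pow_left₀ (norm_nonneg _) (hnorm ▸ hle)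
  calc ‖u‖ ^ 2 ≤ ((1 - 2 * ε)⁻¹ * ‖ustar‖) ^ 2 := h2
    _ = ‖ustar‖ ^ 2 / (1 - 2 * ε) ^ 2 := by field_simp
end

section
/- Let d and S be positive integers, ε > 0, and b, f ∈ ℝ with |f| ≤ ε. Let X be a real symmetric positive semidefinite d × d matrix with trace 1, let A be a real d × d matrix with spectral (ℓ₂ operator) norm ‖A‖₂ ≤ 1, and let E be a real d × d matrix with at most S nonzero entries, each satisfying |E_{jk}| ≤ ε/min(d, S). If the Frobenius inner product satisfies ⟨A + E, X⟩_F ≤ b + f, then ⟨A, X + (3ε/d)·I⟩_F ≤ b + 5ε, where I is the d × d identity matrix. -/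
/-!
Expand `⟨A, X + (3ε/d) I⟩ = ⟨A + E, X⟩ - ⟨E, X⟩ + (3ε/d) tr A`. Positive semidefiniteness gives
`2 |X_jk| ≤ X_jj + X_kk`, so the entries of `X` on the support of `E` have total absolute value at
most `min(d, S) · tr X = min(d, S)`, whence `|⟨E, X⟩| ≤ ε`. Every diagonal entry of `A` is bounded
by `‖A‖₂ ≤ 1`, so `tr A ≤ d` and the shift costs at most `3ε`.
-/

open Finset
open scoped Matrix.Norms.L2Operator

lemma div_mul_le_of_nonneg {α : Type*} [DivisionRing α] [PartialOrder α] {a : α} (ha : 0 ≤ a)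
    (b : α) : a / b * b ≤ a := by
  rcases eq_or_ne b 0 with rfl | hb
  · simpa using ha
  · rw [div_mul_cancel₀ a hb]

namespace Matrix

variable {𝕜 m n : Type*} [Fintype m] [Fintype n]

lemma norm_apply_le_l2_opNorm [RCLike 𝕜] [DecidableEq n] (A : Matrix m n 𝕜) (i : m) (j : n) :
    ‖A i j‖ ≤ ‖A‖ := by
  have h := A.l2_opNorm_mulVec (PiLp.single 2 j 1)
  rw [PiLp.norm_single, norm_one, mul_one] at h
  refine le_trans ?_ h
  simpa [mulVec_single_one] using
    PiLp.norm_apply_le ((EuclideanSpace.equiv m 𝕜).symm (A *ᵥ Pi.single j 1)) i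

lemma norm_trace_le_card_mul_l2_opNorm [RCLike 𝕜] [DecidableEq n] (A : Matrix n n 𝕜) :
    ‖A.trace‖ ≤ Fintype.card n * ‖A‖ :=
  calc ‖A.trace‖ ≤ ∑ i, ‖A i i‖ := norm_sum_le _ _
    _ ≤ ∑ _i : n, ‖A‖ := sum_le_sum fun i _ => A.norm_apply_le_l2_opNorm i i
    _ = Fintype.card n * ‖A‖ := by simp

lemma sum_sum_add_mul (A E X : Matrix m n ℝ) :
    ∑ j, ∑ k, (A + E) j k * X j k = ∑ j, ∑ k, A j k * X j k + ∑ j, ∑ k, E j k * X j k := by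
  simp only [add_apply, add_mul, sum_add_distrib]

lemma sum_sum_mul_add_smul_one [DecidableEq n] (A X : Matrix n n ℝ) (c : ℝ) :
    ∑ j, ∑ k, A j k * (X + c • (1 : Matrix n n ℝ)) j k = ∑ j, ∑ k, A j k * X j k + c * A.trace := by
  simp [one_apply, mul_add, sum_add_distrib, trace, mul_sum, mul_comm]

namespace PosSemidef

variable {X : Matrix n n ℝ}

lemma apply_le_trace (hX : X.PosSemidef) (i : n) : X i i ≤ X.trace :=
  single_le_sum (f := fun j => X j j) (fun _ _ => hX.diag_nonneg) (mem_univ i)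

lemma two_mul_abs_apply_le (hX : X.PosSemidef) (i j : n) :
    2 * |X i j| ≤ X i i + X j j := by
  classical
  have hquad : ∀ c : ℝ, 0 ≤ X i i + c * X j i + c * (X i j + c * X j j) := fun c => by
    have := hX.dotProduct_mulVec_nonneg (Pi.single i 1 + c • Pi.single j 1)
    simpa [mulVec_add, mulVec_smul, add_dotProduct, dotProduct_add] using this
  have h₁ := hquad 1
  have h₂ := hquad (-1)
  have hsymm : X j i = X i j := by simpa using hX.1.apply i j
  rw [hsymm] at h₁ h₂
  rcases abs_cases (X i j) with ⟨h, _⟩ | ⟨h, _⟩ <;> rw [h] <;> linarith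

lemma sum_abs_apply_le (hX : X.PosSemidef) (s : Finset (n × n)) :
    ∑ p ∈ s, |X p.1 p.2| ≤ min (Fintype.card n : ℝ) #s * X.trace := by
  set t : n × n → ℝ := fun p => (X p.1 p.1 + X p.2 p.2) / 2
  have ht_nonneg : ∀ p, 0 ≤ t p := fun p => by
    have := hX.diag_nonneg (i := p.1); have := hX.diag_nonneg (i := p.2); positivity
  have ht_sum : ∑ p, t p = Fintype.card n * X.trace := by
    simp only [t, Fintype.sum_prod_type, add_div, sum_add_distrib, ← sum_div, sum_const,
      card_univ, nsmul_eq_mul, trace, diag_apply, ← mul_sum]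
    ring
  calc ∑ p ∈ s, |X p.1 p.2| ≤ ∑ p ∈ s, t p :=
        sum_le_sum fun p _ => by dsimp only [t]; linarith [hX.two_mul_abs_apply_le p.1 p.2]
    _ ≤ min (Fintype.card n : ℝ) #s * X.trace := by
      rw [min_mul_of_nonneg _ _ hX.trace_nonneg]
      refine le_min ?_ ?_
      · exact ht_sum ▸ sum_le_sum_of_subset_of_nonneg (subset_univ s) fun p _ _ => ht_nonneg p
      · calc ∑ p ∈ s, t p ≤ ∑ _p ∈ s, X.trace := sum_le_sum fun p _ => by
              dsimp only [t]; linarith [hX.apply_le_trace p.1, hX.apply_le_trace p.2]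
          _ = #s * X.trace := by rw [sum_const, nsmul_eq_mul]

lemma abs_sum_sum_mul_le_of_sparse (hX : X.PosSemidef) {E : Matrix n n ℝ} {S : ℕ} {δ : ℝ}
    (hδ : 0 ≤ δ) (hsupp : #{p : n × n | E p.1 p.2 ≠ 0} ≤ S) (hE : ∀ j k, |E j k| ≤ δ) :
    |∑ j, ∑ k, E j k * X j k| ≤ δ * min (Fintype.card n : ℝ) S * X.trace := by
  set s := ({p : n × n | E p.1 p.2 ≠ 0} : Finset (n × n))
  have hsum : ∑ j, ∑ k, E j k * X j k = ∑ p ∈ s, E p.1 p.2 * X p.1 p.2 := by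
    rw [← Fintype.sum_prod_type']
    exact (sum_filter_of_ne fun p _ h => left_ne_zero_of_mul h).symm
  have htrace := hX.trace_nonneg
  calc |∑ j, ∑ k, E j k * X j k| ≤ ∑ p ∈ s, |E p.1 p.2| * |X p.1 p.2| := by
        rw [hsum]; exact (abs_sum_le_sum_abs _ _).trans_eq (sum_congr rfl fun p _ => abs_mul _ _)
    _ ≤ ∑ p ∈ s, δ * |X p.1 p.2| :=
        sum_le_sum fun p _ => mul_le_mul_of_nonneg_right (hE _ _) (abs_nonneg _)
    _ ≤ δ * (min (Fintype.card n : ℝ) #s * X.trace) := by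
        rw [← mul_sum]; exact mul_le_mul_of_nonneg_left (hX.sum_abs_apply_le s) hδ
    _ ≤ δ * min (Fintype.card n : ℝ) S * X.trace := by
        rw [mul_assoc]; gcongr

end PosSemidef

end Matrix

theorem stmt_15_general {d : ℕ} (S : ℕ) (ε : ℝ)
    (b f : ℝ) (hf : |f| ≤ ε)
    (X : Matrix (Fin d) (Fin d) ℝ) (hXpsd : X.PosSemidef)
    (hXtr : X.trace = 1)
    (A : Matrix (Fin d) (Fin d) ℝ) (hA : ‖A‖ ≤ 1)
    (E : Matrix (Fin d) (Fin d) ℝ)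
    (hEsupp : (Finset.univ.filter fun jk : Fin d × Fin d => E jk.1 jk.2 ≠ 0).card ≤ S)
    (hEsmall : ∀ j k, |E j k| ≤ ε / min (d : ℝ) (S : ℝ))
    (hfeas : ∑ j, ∑ k, (A + E) j k * X j k ≤ b + f) :
    ∑ j, ∑ k, A j k * (X + (3 * ε / d) • (1 : Matrix (Fin d) (Fin d) ℝ)) j k
      ≤ b + 5 * ε := by
  have hε₀ : 0 ≤ ε := (abs_nonneg f).trans hf
  have hEX : |∑ j, ∑ k, E j k * X j k| ≤ ε := by
    have := hXpsd.abs_sum_sum_mul_le_of_sparse (div_nonneg hε₀ (by positivity)) hEsupp hEsmall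
    rw [hXtr, mul_one, Fintype.card_fin] at this
    exact this.trans (div_mul_le_of_nonneg hε₀ _)
  have htrace : 3 * ε / d * A.trace ≤ 3 * ε := by
    have htrA : A.trace ≤ d := by
      have := A.norm_trace_le_card_mul_l2_opNorm
      rw [Real.norm_eq_abs, Fintype.card_fin] at this
      exact (le_abs_self _).trans (this.trans (mul_le_of_le_one_right (by positivity) hA))
    calc 3 * ε / d * A.trace ≤ 3 * ε / d * d := by gcongr
      _ ≤ 3 * ε := div_mul_le_of_nonneg (by positivity) _
  rw [Matrix.sum_sum_mul_add_smul_one]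
  rw [Matrix.sum_sum_add_mul] at hfeas
  linarith [abs_le.1 hEX, abs_le.1 hf]

/-- **The shifted solution approximately satisfies the original SDP
constraints.** With `X ⪰ 0` of unit trace, `‖A‖₂ ≤ 1` (spectral norm), `E`
having at most `S` nonzero entries each of size at most `ε/min(d,S)`, and
`|f| ≤ ε`, feasibility `⟨A + E, X⟩_F ≤ b + f` of the snapped constraint
implies `⟨A, X + (3ε/d)·I⟩_F ≤ b + 5ε`. -/
theorem stmt_15 {d : ℕ} (hd : 0 < d) (S : ℕ) (hS : 0 < S) (ε : ℝ) (hε : 0 < ε)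
    (b f : ℝ) (hf : |f| ≤ ε)
    (X : Matrix (Fin d) (Fin d) ℝ) (hXsymm : X.IsSymm) (hXpsd : X.PosSemidef)
    (hXtr : X.trace = 1)
    (A : Matrix (Fin d) (Fin d) ℝ) (hA : ‖A‖ ≤ 1)
    (E : Matrix (Fin d) (Fin d) ℝ)
    (hEsupp : (Finset.univ.filter fun jk : Fin d × Fin d => E jk.1 jk.2 ≠ 0).card ≤ S)
    (hEsmall : ∀ j k, |E j k| ≤ ε / min (d : ℝ) (S : ℝ))
    (hfeas : ∑ j, ∑ k, (A + E) j k * X j k ≤ b + f) :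
    ∑ j, ∑ k, A j k * (X + (3 * ε / d) • (1 : Matrix (Fin d) (Fin d) ℝ)) j k
      ≤ b + 5 * ε :=
  stmt_15_general S ε b f hf X hXpsd hXtr A hA E hEsupp hEsmall hfeas
end

section
/- Let d be a positive integer and 0 < ε ≤ d. Let X be a real d × d matrix with spectral (ℓ₂ operator) norm ‖X‖₂ ≤ 1, let y ∈ ℝ^d be a unit vector, and let e ∈ ℝ^d satisfy ‖e‖ ≤ ε/d. If (y + e)ᵀ X (y + e) ≥ 0, then yᵀ (X + (3ε/d)·I) y ≥ 0, where I is the d × d identity matrix. -/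
/-!
For a contraction `T`, expanding `⟪y + e, T (y + e)⟫` and bounding the three cross terms by
Cauchy–Schwarz shows that it exceeds `⟪y, T y⟫` by at most `2‖e‖ + ‖e‖²` when `‖y‖ = 1`.
-/

open scoped Matrix.Norms.L2Operator RealInnerProductSpace

section Contraction

variable {E : Type*} [NormedAddCommGroup E] [InnerProductSpace ℝ E]
  {T : E →ₗ[ℝ] E}

theorem abs_inner_map_le_of_contraction (hT : ∀ v, ‖T v‖ ≤ ‖v‖) (u v : E) :
    |⟪u, T v⟫| ≤ ‖u‖ * ‖v‖ :=
  (abs_real_inner_le_norm u (T v)).trans (by gcongr; exact hT v)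

theorem neg_norm_sq_le_inner_map_self_of_contraction (hT : ∀ v, ‖T v‖ ≤ ‖v‖) (y : E) :
    -‖y‖ ^ 2 ≤ ⟪y, T y⟫ := by
  have := abs_le.mp (abs_inner_map_le_of_contraction hT y y)
  nlinarith

theorem inner_map_add_sub_inner_map_le_of_contraction (hT : ∀ v, ‖T v‖ ≤ ‖v‖) (y e : E) :
    ⟪y + e, T (y + e)⟫ - ⟪y, T y⟫ ≤ 2 * ‖y‖ * ‖e‖ + ‖e‖ ^ 2 := by
  have hye := abs_le.mp (abs_inner_map_le_of_contraction hT y e)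
  have hey := abs_le.mp (abs_inner_map_le_of_contraction hT e y)
  have hee := abs_le.mp (abs_inner_map_le_of_contraction hT e e)
  simp only [map_add, inner_add_left, inner_add_right]
  nlinarith

/-- If `δ ≥ 1` the bound already follows from `⟪y, T y⟫ ≥ -1`; otherwise `‖e‖² ≤ ‖e‖ ≤ δ`. -/
theorem neg_three_mul_le_inner_map_self_of_inner_map_add_nonneg {y e : E} {δ : ℝ}
    (hT : ∀ v, ‖T v‖ ≤ ‖v‖) (hy : ‖y‖ = 1) (he : ‖e‖ ≤ δ) (hye : 0 ≤ ⟪y + e, T (y + e)⟫) :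
    -(3 * δ) ≤ ⟪y, T y⟫ := by
  rcases le_or_gt 1 δ with hδ | hδ
  · have := neg_norm_sq_le_inner_map_self_of_contraction hT y
    rw [hy] at this
    linarith
  · have hpert := inner_map_add_sub_inner_map_le_of_contraction hT y e
    rw [hy] at hpert
    nlinarith [norm_nonneg e]

end Contraction

theorem Matrix.inner_toEuclideanLin_add_smul_one {n : Type*} [Fintype n] [DecidableEq n]
    (X : Matrix n n ℝ) (c : ℝ) (y : EuclideanSpace ℝ n) :
    ⟪y, (X + c • 1).toEuclideanLin y⟫ = ⟪y, X.toEuclideanLin y⟫ + c * ‖y‖ ^ 2 := by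
  have hone : (1 : Matrix n n ℝ).toEuclideanLin y = y := by
    ext i
    simp
  rw [map_add, map_smul, LinearMap.add_apply, LinearMap.smul_apply, hone, inner_add_right,
    real_inner_smul_right, real_inner_self_eq_norm_sq]

theorem stmt_16_general {d : ℕ} (ε : ℝ)
    (X : Matrix (Fin d) (Fin d) ℝ) (hX : ‖X‖ ≤ 1)
    (y e : EuclideanSpace ℝ (Fin d)) (hy : ‖y‖ = 1) (he : ‖e‖ ≤ ε / d)
    (hlattice : 0 ≤ ⟪y + e, Matrix.toEuclideanLin X (y + e)⟫) :
    0 ≤ ⟪y, Matrix.toEuclideanLin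
        (X + (3 * ε / d) • (1 : Matrix (Fin d) (Fin d) ℝ)) y⟫ := by
  have hcontr (v : EuclideanSpace ℝ (Fin d)) : ‖X.toEuclideanLin v‖ ≤ ‖v‖ :=
    (X.l2_opNorm_mulVec v).trans (mul_le_of_le_one_left (norm_nonneg v) hX)
  have := neg_three_mul_le_inner_map_self_of_inner_map_add_nonneg hcontr hy he hlattice
  rw [Matrix.inner_toEuclideanLin_add_smul_one, hy, one_pow, mul_one, mul_div_assoc]
  linarith

/-- **Lattice PSD constraints imply approximate positive semidefiniteness.**
If `‖X‖₂ ≤ 1` (spectral norm), `y` is a unit vector, `‖e‖ ≤ ε/d`, and the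
lattice constraint `(y+e)ᵀ X (y+e) ≥ 0` holds, then
`yᵀ (X + (3ε/d)·I) y ≥ 0`. -/
theorem stmt_16 {d : ℕ} (hd : 0 < d) (ε : ℝ) (hε0 : 0 < ε) (hεd : ε ≤ d)
    (X : Matrix (Fin d) (Fin d) ℝ) (hX : ‖X‖ ≤ 1)
    (y e : EuclideanSpace ℝ (Fin d)) (hy : ‖y‖ = 1) (he : ‖e‖ ≤ ε / d)
    (hlattice : 0 ≤ ⟪y + e, Matrix.toEuclideanLin X (y + e)⟫) :
    0 ≤ ⟪y, Matrix.toEuclideanLin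
        (X + (3 * ε / d) • (1 : Matrix (Fin d) (Fin d) ℝ)) y⟫ :=
  stmt_16_general ε X hX y e hy he hlattice
end
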